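/- Progress and Subject Reduction imply Stronger Soundness: given (Progress) and the Subject Reduction property (reduction from a well-typed, OK, fieldGuarded state yields a well-typed, OK, fieldGuarded state), every reduction sequence from the initial state satisfies OK; i.e., if c : Cap; ∅ ⊢ e0 : T0 and c ↦ Cap{_} | e0 →⁺ σ | e, then OK(σ, e). (The base case holds because the initial memory contains only c, which is valid and, having only mut fields, trivially wellEncapsulated, and the initial expression is trivially fieldGuarded.) -/

import Mathlib

/-!
Formalization of the invariant-protocol calculus of
"Sound runtime verification of invariants via type modifiers and object capabilities".

Locations and names are natural numbers; memory maps locations to objects `C{vs}`.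
The typing relation, reduction relation, field modifiers, the "field mentioned in the
invariant" relation, the invariant-method name, the `Cap` class and invariant-method
bodies are abstract (bundled in `Sys`), and the axioms of Appendix A are stated as
properties of such a system.
-/

namespace CalcInv

abbrev Loc := ℕ
abbrev Name := ℕ

/-- Type modifiers. -/
inductive Mdf
  | mut | imm | capsule | read
  deriving DecidableEq

/-- Types `mdf C`. -/
structure Ty where
  mdf : Mdf
  cls : Name

/-- An object `C{vs}`: a class name together with its field values (locations). -/
abbrev Obj := Name × List Loc

/-- Memory: a (partial) map from locations to objects. -/
abbrev Memory := Loc → Option Obj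

/-- Expressions of the calculus (values `v` are locations). -/
inductive Expr
  | var (x : Name)
  | loc (l : Loc)
  | tt
  | ff
  | call (recv : Expr) (m : Name) (args : List Expr)
  | facc (recv : Expr) (f : Name)
  | fupd (recv : Expr) (f : Name) (rhs : Expr)
  | new (C : Name) (args : List Expr)
  | tryCatch (ann : Option Memory) (body handler : Expr)
  | monitor (l : Loc) (body inv : Expr)

/-- Evaluation contexts `E_v`. -/
inductive ECtx
  | hole
  | callRecv (E : ECtx) (m : Name) (args : List Expr)
  | callArg (recv : Loc) (m : Name) (pre : List Loc) (E : ECtx) (post : List Expr)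
  | fupdRhs (recv : Loc) (f : Name) (E : ECtx)
  | newArg (C : Name) (pre : List Loc) (E : ECtx) (post : List Expr)
  | monBody (l : Loc) (E : ECtx) (inv : Expr)
  | monInv (l : Loc) (v : Loc) (E : ECtx)
  | tryBody (ann : Memory) (E : ECtx) (handler : Expr)

def ECtx.plug : ECtx → Expr → Expr
  | .hole, e => e
  | .callRecv E m args, e => .call (E.plug e) m args
  | .callArg r m pre E post, e => .call (.loc r) m (pre.map Expr.loc ++ (E.plug e) :: post)
  | .fupdRhs r f E, e => .fupd (.loc r) f (E.plug e)
  | .newArg C pre E post, e => .new C (pre.map Expr.loc ++ (E.plug e) :: post)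
  | .monBody l E i, e => .monitor l (E.plug e) i
  | .monInv l v E, e => .monitor l (.loc v) (E.plug e)
  | .tryBody a E h, e => .tryCatch (some a) (E.plug e) h

/-- Composition of evaluation contexts: `E.comp E'` plugs `E'` into the hole of `E`. -/
def ECtx.comp : ECtx → ECtx → ECtx
  | .hole, E2 => E2
  | .callRecv E m args, E2 => .callRecv (E.comp E2) m args
  | .callArg r m pre E post, E2 => .callArg r m pre (E.comp E2) post
  | .fupdRhs r f E, E2 => .fupdRhs r f (E.comp E2)
  | .newArg C pre E post, E2 => .newArg C pre (E.comp E2) post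
  | .monBody l E i, E2 => .monBody l (E.comp E2) i
  | .monInv l v E, E2 => .monInv l v (E.comp E2)
  | .tryBody a E h, E2 => .tryBody a (E.comp E2) h

/-- Full contexts `E` (one hole, anywhere). -/
inductive FCtx
  | hole
  | callRecv (E : FCtx) (m : Name) (args : List Expr)
  | callArg (recv : Expr) (m : Name) (pre : List Expr) (E : FCtx) (post : List Expr)
  | faccRecv (E : FCtx) (f : Name)
  | fupdRecv (E : FCtx) (f : Name) (rhs : Expr)
  | fupdRhs (recv : Expr) (f : Name) (E : FCtx)
  | newArg (C : Name) (pre : List Expr) (E : FCtx) (post : List Expr)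
  | monBody (l : Loc) (E : FCtx) (inv : Expr)
  | monInv (l : Loc) (body : Expr) (E : FCtx)
  | tryBody (ann : Option Memory) (E : FCtx) (handler : Expr)
  | tryHandler (ann : Option Memory) (body : Expr) (E : FCtx)

def FCtx.plug : FCtx → Expr → Expr
  | .hole, e => e
  | .callRecv E m args, e => .call (E.plug e) m args
  | .callArg r m pre E post, e => .call r m (pre ++ (E.plug e) :: post)
  | .faccRecv E f, e => .facc (E.plug e) f
  | .fupdRecv E f rhs, e => .fupd (E.plug e) f rhs
  | .fupdRhs r f E, e => .fupd r f (E.plug e)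
  | .newArg C pre E post, e => .new C (pre ++ (E.plug e) :: post)
  | .monBody l E i, e => .monitor l (E.plug e) i
  | .monInv l b E, e => .monitor l b (E.plug e)
  | .tryBody a E h, e => .tryCatch a (E.plug e) h
  | .tryHandler a b E, e => .tryCatch a b (E.plug e)

def FCtx.comp : FCtx → FCtx → FCtx
  | .hole, E2 => E2
  | .callRecv E m args, E2 => .callRecv (E.comp E2) m args
  | .callArg r m pre E post, E2 => .callArg r m pre (E.comp E2) post
  | .faccRecv E f, E2 => .faccRecv (E.comp E2) f
  | .fupdRecv E f rhs, E2 => .fupdRecv (E.comp E2) f rhs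
  | .fupdRhs r f E, E2 => .fupdRhs r f (E.comp E2)
  | .newArg C pre E post, E2 => .newArg C pre (E.comp E2) post
  | .monBody l E i, E2 => .monBody l (E.comp E2) i
  | .monInv l b E, E2 => .monInv l b (E.comp E2)
  | .tryBody a E h, E2 => .tryBody a (E.comp E2) h
  | .tryHandler a b E, E2 => .tryHandler a b (E.comp E2)

/-- Location `l` occurs (as a subexpression) in `e`. -/
def Occurs (l : Loc) (e : Expr) : Prop := ∃ E : FCtx, E.plug (.loc l) = e

/-- Variable `x` occurs in `e`. -/
def VarOccurs (x : Name) (e : Expr) : Prop := ∃ E : FCtx, E.plug (.var x) = e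

/-- Location `l` occurs exactly once in `e`. -/
def OccursUnique (l : Loc) (e : Expr) : Prop :=
  (∃ E : FCtx, E.plug (.loc l) = e) ∧
    ∀ E₁ E₂ : FCtx, E₁.plug (.loc l) = e → E₂.plug (.loc l) = e → E₁ = E₂

/-- `e` is a source expression: it contains no (runtime) monitor expressions. -/
def NoMonitors (e : Expr) : Prop :=
  ¬ ∃ (E : FCtx) (l : Loc) (e₁ e₂ : Expr), E.plug (.monitor l e₁ e₂) = e

/-- Reachability in memory: `Reach σ l l'` iff `l'` is in the reachable
object graph (ROG) of `l` in `σ`. -/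
inductive Reach (σ : Memory) : Loc → Loc → Prop
  | refl (l : Loc) : Reach σ l l
  | step {l l' l'' : Loc} {C : Name} {vs : List Loc} :
      Reach σ l l' → σ l' = some (C, vs) → l'' ∈ vs → Reach σ l l''

/-- `Σ^σ`: the memory environment extracted from `σ`. -/
def SigmaOf (σ : Memory) : Loc → Option Name := fun l => (σ l).map Prod.fst

def emptyTEnv : Name → Option Ty := fun _ => none

def singleTEnv (x : Name) (T : Ty) : Name → Option Ty :=
  fun y => if y = x then some T else none

/-- `σ ∖ l`. -/
def removeLoc (σ : Memory) (l : Loc) : Memory :=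
  fun l' => if l' = l then none else σ l'

/-- `σ[l.f = v]`. -/
def updMem (σ : Memory) (l : Loc) (f : Name) (v : Loc) : Memory :=
  fun l' => if l' = l then (σ l).map (fun o => (o.1, o.2.set f v)) else σ l'

/-- `σ, l ↦ C{vs}`. -/
def extendMem (σ : Memory) (l : Loc) (C : Name) (vs : List Loc) : Memory :=
  fun l' => if l' = l then some (C, vs) else σ l'

/-- `e' = e[x₁ = ρ x₁, …]`: `e'` is obtained from `e` by substituting
locations for all variables according to `ρ`. -/
inductive IsSubst (ρ : Name → Loc) : Expr → Expr → Prop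
  | var (x : Name) : IsSubst ρ (.var x) (.loc (ρ x))
  | loc (l : Loc) : IsSubst ρ (.loc l) (.loc l)
  | tt : IsSubst ρ .tt .tt
  | ff : IsSubst ρ .ff .ff
  | call {r r' : Expr} {m : Name} {args args' : List Expr} :
      IsSubst ρ r r' → args.length = args'.length →
      (∀ p ∈ List.zip args args', IsSubst ρ p.1 p.2) →
      IsSubst ρ (.call r m args) (.call r' m args')
  | facc {r r' : Expr} {f : Name} :
      IsSubst ρ r r' → IsSubst ρ (.facc r f) (.facc r' f)
  | fupd {r r' b b' : Expr} {f : Name} :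
      IsSubst ρ r r' → IsSubst ρ b b' → IsSubst ρ (.fupd r f b) (.fupd r' f b')
  | new {C : Name} {args args' : List Expr} :
      args.length = args'.length →
      (∀ p ∈ List.zip args args', IsSubst ρ p.1 p.2) →
      IsSubst ρ (.new C args) (.new C args')
  | tryC {a : Option Memory} {b b' h h' : Expr} :
      IsSubst ρ b b' → IsSubst ρ h h' →
      IsSubst ρ (.tryCatch a b h) (.tryCatch a b' h')
  | mon {l : Loc} {b b' i i' : Expr} :
      IsSubst ρ b b' → IsSubst ρ i i' →
      IsSubst ρ (.monitor l b i) (.monitor l b' i')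

/-- `r` is a redex `r_l` containing the location `l`. -/
def RedexWith (l : Loc) (e : Expr) : Prop :=
  (∃ (v : Loc) (m : Name) (vs : List Loc),
      e = .call (.loc v) m (vs.map Expr.loc) ∧ (l = v ∨ l ∈ vs)) ∨
  (∃ f : Name, e = .facc (.loc l) f) ∨
  (∃ (v₁ v₂ : Loc) (f : Name),
      e = .fupd (.loc v₁) f (.loc v₂) ∧ (l = v₁ ∨ l = v₂)) ∨
  (∃ (C : Name) (vs : List Loc), e = .new C (vs.map Expr.loc) ∧ l ∈ vs)

/-- A validation error: an unguarded monitor whose invariant evaluation returned false. -/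
def IsError (e : Expr) : Prop :=
  ∃ (Ev : ECtx) (l v : Loc),
    Ev.plug (.monitor l (.loc v) .ff) = e ∧
    ∀ (E' E'' : ECtx) (σa : Memory) (h : Expr), Ev ≠ E'.comp (.tryBody σa E'' h)

/-- `e` is monitored on `l`. -/
def Monitored (e : Expr) (l : Loc) : Prop :=
  ∃ (Ev : ECtx) (e₁ e₂ : Expr),
    Ev.plug (.monitor l e₁ e₂) = e ∧ (e₁ = .loc l ∨ ¬ Occurs l e₁)

/-- `l` is garbage: not transitively reachable from `e` in `σ`. -/
def Garbage (l : Loc) (σ : Memory) (e : Expr) : Prop :=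
  ¬ ∃ l₀ : Loc, Occurs l₀ e ∧ Reach σ l₀ l

/-- The distinguished variable `this`. -/
def thisVar : Name := 0

/-- `body` uses `this` only as the receiver of field accesses. -/
def UsesThisOnlyToReadFields (body : Expr) : Prop :=
  ∀ E : FCtx, E.plug (.var thisVar) = body →
    ∃ (E' : FCtx) (f : Name), E = E'.comp (.faccRecv .hole f)

/-- A system: typing relation, reduction relation, field modifiers, the
"field mentioned in the invariant of class C" relation, the name of the
`invariant` method, the `Cap` class, and invariant-method bodies. -/
structure Sys where
  Typing : (Loc → Option Name) → (Name → Option Ty) → Expr → Ty → Prop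
  Step : Memory × Expr → Memory × Expr → Prop
  fieldMdf : Name → Name → Option Mdf
  fInInv : Name → Name → Prop
  invM : Name
  capC : Name
  invBody : Name → Expr

namespace Sys

variable (S : Sys)

/-- `l.invariant()`. -/
def invCall (l : Loc) : Expr := .call (.loc l) S.invM []

/-- The encapsulated ROG of `l₀`: locations reachable from the values of the
`imm` and `capsule` fields of `l₀`. -/
def erog (σ : Memory) (l₀ : Loc) : Set Loc :=
  {l | ∃ (C : Name) (vs : List Loc) (f : Name) (v : Loc),
        σ l₀ = some (C, vs) ∧ vs[f]? = some v ∧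
        (S.fieldMdf C f = some Mdf.imm ∨ S.fieldMdf C f = some Mdf.capsule) ∧
        Reach σ v l}

/-- `mutatable(l, σ, e)`: some occurrence of `l` in `e` makes the expression
ill-typed when that occurrence is retyped as `imm`. -/
def Mutatable (σ : Memory) (l : Loc) (e : Expr) : Prop :=
  ∃ (E : FCtx) (C : Name) (x : Name),
    SigmaOf σ l = some C ∧ E.plug (.loc l) = e ∧ ¬ VarOccurs x e ∧
    ∀ T' : Ty, ¬ S.Typing (SigmaOf σ) (singleTEnv x ⟨Mdf.imm, C⟩) (E.plug (.var x)) T'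

/-- `wellEncapsulated(σ, e, l₀)`. -/
def WellEncapsulated (σ : Memory) (e : Expr) (l₀ : Loc) : Prop :=
  ∀ l ∈ S.erog σ l₀, ¬ S.Mutatable σ l e

/-- Deterministic reduction `⇒`: the unique possible step. -/
def DStep : Memory × Expr → Memory × Expr → Prop :=
  fun s t => S.Step s t ∧ ∀ t', S.Step s t' → t' = t

/-- `valid(σ, l)`: `l.invariant()` deterministically reduces to `true` in
finitely many steps, preserving the pre-existing memory `σ`. -/
def Valid (σ : Memory) (l : Loc) : Prop :=
  ∃ τ : Memory,
    Relation.TransGen S.DStep (σ, S.invCall l) (τ, Expr.tt) ∧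
    ∀ l', (σ l').isSome → τ l' = σ l'

/-- `OK(σ, e)`. -/
def OKState (σ : Memory) (e : Expr) : Prop :=
  ∀ l, (σ l).isSome →
    Garbage l σ e ∨ (S.Valid σ l ∧ S.WellEncapsulated σ e l) ∨ Monitored e l

/-- `fieldGuarded(σ, e)`: every mut-typed access `l.f` to a capsule field
mentioned in the invariant of `l`'s class is individually guarded by a monitor
on `l` in which `l` occurs exactly once. -/
def FieldGuarded (σ : Memory) (e : Expr) : Prop :=
  ∀ (E : FCtx) (l : Loc) (f : Name) (C : Name) (vs : List Loc),
    E.plug (.facc (.loc l) f) = e →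
    σ l = some (C, vs) →
    S.fieldMdf C f = some Mdf.capsule →
    S.fInInv C f →
    ((∀ (x Cx : Name) (T : Ty),
        ¬ S.Typing (SigmaOf σ) (singleTEnv x ⟨Mdf.mut, Cx⟩) (E.plug (.var x)) T)
      ∨ ∃ (E' E'' : FCtx) (e₂ : Expr),
          E = E'.comp (.monBody l E'' e₂) ∧
          OccursUnique l (E''.plug (.facc (.loc l) f)))

/-- `trusted(Ev, r_l)`. -/
def Trusted (Ev : ECtx) (r : Expr) (l : Loc) : Prop :=
  (r = S.invCall l ∧ ∃ (Ev' : ECtx) (v : Loc), Ev = Ev'.comp (.monInv l v .hole)) ∨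
  ((∃ f : Name, r = .facc (.loc l) f) ∧
    ∃ (Ev' : ECtx) (v : Loc) (Ev'' : ECtx), Ev = Ev'.comp (.monInv l v Ev''))

/-- The initial memory `c ↦ Cap{vs}`. -/
def initMem (c : Loc) (vs : List Loc) : Memory :=
  fun l => if l = c then some (S.capC, vs) else none

/-! ### The axioms of Appendix A, as properties of a system -/

/-- (Progress). -/
def ProgressAx : Prop :=
  ∀ (σ : Memory) (e : Expr) (T : Ty),
    S.Typing (SigmaOf σ) emptyTEnv e T →
    (∀ l : Loc, e ≠ .loc l) → ¬ IsError e →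
    ∃ s' : Memory × Expr, S.Step (σ, e) s'

/-- (Subject Reduction Base). -/
def SubjectReductionBase : Prop :=
  ∀ (σ₀ : Memory) (e₀ : Expr) (T₀ : Ty) (σ₁ : Memory) (e₁ : Expr),
    S.Typing (SigmaOf σ₀) emptyTEnv e₀ T₀ → S.Step (σ₀, e₀) (σ₁, e₁) →
    ∃ T₁, S.Typing (SigmaOf σ₁) emptyTEnv e₁ T₁

/-- (Mut Field). -/
def MutFieldAx : Prop :=
  (∀ (Sg : Loc → Option Name) (Γ : Name → Option Ty) (e : Expr) (f C : Name),
      S.Typing Sg Γ (.facc e f) ⟨Mdf.mut, C⟩ → ∃ C', S.Typing Sg Γ e ⟨Mdf.mut, C'⟩) ∧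
  (∀ (Sg : Loc → Option Name) (Γ : Name → Option Ty) (e₀ : Expr) (f : Name)
      (e₁ : Expr) (T : Ty),
      S.Typing Sg Γ (.fupd e₀ f e₁) T → ∃ C', S.Typing Sg Γ e₀ ⟨Mdf.mut, C'⟩)

/-- (Head Not Circular). -/
def HeadNotCircularAx : Prop :=
  ∀ (σ : Memory) (Γ : Name → Option Ty) (l : Loc) (T : Ty),
    S.Typing (SigmaOf σ) Γ (.loc l) T → l ∉ S.erog σ l

/-- (Capsule Tree). -/
def CapsuleTreeAx : Prop :=
  ∀ (σ : Memory) (Γ : Name → Option Ty) (e : Expr) (T : Ty) (l₀ l₁ l₂ : Loc),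
    S.Typing (SigmaOf σ) Γ e T →
    l₂ ∈ S.erog σ l₁ → l₁ ∈ S.erog σ l₀ → S.Mutatable σ l₂ e →
    l₂ ∉ S.erog (removeLoc σ l₁) l₀

/-- (Determinism): a well-typed expression with no free `mut` variables reduces
deterministically without mutating pre-existing memory. -/
def DeterminismAx : Prop :=
  ∀ (Γ : Name → Option Ty) (e : Expr) (T : Ty),
    S.Typing (fun _ => none) Γ e T →
    (∀ x T', Γ x = some T' → T'.mdf ≠ Mdf.mut) →
    ∀ (ρ : Name → Loc) (σ : Memory) (e' : Expr),
      IsSubst ρ e e' →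
      (∃ T'', S.Typing (SigmaOf σ) emptyTEnv e' T'') →
      ∀ (σ' : Memory) (e'' : Expr),
        Relation.TransGen S.Step (σ, e') (σ', e'') →
        Relation.TransGen S.DStep (σ, e') (σ', e'') ∧
          ∀ l, (σ l).isSome → σ' l = σ l

/-- (Strong Exception Safety). -/
def StrongExceptionSafetyAx : Prop :=
  ∀ (σ σf : Memory) (Ev : ECtx) (e₀ e₁ : Expr) (T : Ty),
    (∀ l, (σ l).isSome → σf l = σ l) →
    S.Typing (SigmaOf σf) emptyTEnv (Ev.plug (.tryCatch (some σ) e₀ e₁)) T →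
    ∀ (σ'' : Memory) (e' : Expr),
      S.Step (σf, Ev.plug (.tryCatch (some σ) e₀ e₁))
             (σ'', Ev.plug (.tryCatch (some σ) e' e₁)) →
      (∀ l, (σ l).isSome → σ'' l = σ l) ∧
        S.Typing (SigmaOf σ) emptyTEnv (Ev.plug e₁) T

/-- `Cap` has only `mut` fields. -/
def CapOnlyMutFields : Prop :=
  ∀ f m, S.fieldMdf S.capC f = some m → m = Mdf.mut

/-- `Cap`'s invariant method is defined to return `true`: every `Cap`
instance is valid. -/
def CapInvariantTrue : Prop :=
  ∀ (σ : Memory) (l : Loc), SigmaOf σ l = some S.capC → S.Valid σ l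

end Sys

end CalcInv

namespace CalcInv

/-- **Progress and Subject Reduction imply Stronger Soundness (Theorem 5).**
Given (Progress) and the Subject Reduction property, every state reachable from
the initial state `c ↦ Cap{_} | e₀` (with `c : Cap; ∅ ⊢ e₀ : T₀` and `e₀` a
source expression) is `OK`. -/
theorem progress_sr_imply_stronger_soundness (S : Sys)
    (hprog : S.ProgressAx)
    (hSR : ∀ (σ₀ : Memory) (e₀ : Expr) (T₀ : Ty) (σ₁ : Memory) (e₁ : Expr),
        S.Typing (SigmaOf σ₀) emptyTEnv e₀ T₀ → S.Step (σ₀, e₀) (σ₁, e₁) →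
        S.OKState σ₀ e₀ → S.FieldGuarded σ₀ e₀ →
        (∃ T₁, S.Typing (SigmaOf σ₁) emptyTEnv e₁ T₁) ∧
          S.OKState σ₁ e₁ ∧ S.FieldGuarded σ₁ e₁)
    (hcapF : S.CapOnlyMutFields) (hcapV : S.CapInvariantTrue)
    (c : Loc) (cvs : List Loc) (e₀ : Expr) (T₀ : Ty)
    (hwt : S.Typing (SigmaOf (S.initMem c cvs)) emptyTEnv e₀ T₀)
    (hsrc : NoMonitors e₀)
    (σ : Memory) (e : Expr)
    (hred : Relation.TransGen S.Step (S.initMem c cvs, e₀) (σ, e)) :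
    S.OKState σ e := by
  -- the invariant carried along the reduction sequence
  set Inv : Memory × Expr → Prop := fun s =>
    (∃ T, S.Typing (SigmaOf s.1) emptyTEnv s.2 T) ∧ S.OKState s.1 s.2 ∧
      S.FieldGuarded s.1 s.2 with hInv
  -- the invariant is preserved by TransGen Step
  have hpres : ∀ s t : Memory × Expr, Relation.TransGen S.Step s t → Inv s → Inv t := by
    intro s t h
    induction h with
    | single hst =>
      intro hs
      obtain ⟨⟨T, hT⟩, hOK, hFG⟩ := hs
      exact hSR _ _ _ _ _ hT hst hOK hFG
    | tail _ hst ih =>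
      intro hs
      obtain ⟨⟨T, hT⟩, hOK, hFG⟩ := ih hs
      exact hSR _ _ _ _ _ hT hst hOK hFG
  -- base case: the invariant holds at the initial state
  have hmemc : S.initMem c cvs c = some (S.capC, cvs) := by
    simp [Sys.initMem]
  have hbase : Inv (S.initMem c cvs, e₀) := by
    refine ⟨⟨T₀, hwt⟩, ?_, ?_⟩
    · -- OKState
      intro l hl
      have hlc : l = c := by
        by_contra hne
        simp [Sys.initMem, hne] at hl
      subst hlc
      refine Or.inr (Or.inl ⟨?_, ?_⟩)
      · exact hcapV _ l (by simp [SigmaOf, hmemc])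
      · -- wellEncapsulated: erog is empty since Cap has only mut fields
        intro l' hl' _
        obtain ⟨C, vs, f, v, hσ, _, hm, _⟩ := hl'
        obtain ⟨rfl, rfl⟩ : S.capC = C ∧ cvs = vs := by
          simpa [hmemc, Prod.ext_iff] using hσ
        rcases hm with hm | hm <;> exact absurd (hcapF f _ hm) (by intro h; cases h)
    · -- FieldGuarded: no capsule fields on Cap
      intro E l f C vs _ hσ hcap _
      have hlc : l = c := by
        by_contra hne
        simp [Sys.initMem, hne] at hσ
      subst hlc
      obtain ⟨rfl, rfl⟩ : S.capC = C ∧ cvs = vs := by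
        simpa [hmemc, Prod.ext_iff] using hσ
      exact absurd (hcapF f _ hcap) (by intro h; cases h)
  exact (hpres _ _ hred hbase).2.1

end CalcInv
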